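/- Let γ > 0, C ≥ 0, and R > 0 be constants given a priori, and let 𝒟 be a domain space over ℝⁿ in which every domain satisfies the Disjoint Supports Assumption, diam(supp(D_in)) < R, and either every domain's ID distribution has a (γ,C)-Hölder continuous density with respect to Lebesgue measure, or every domain's OOD distribution has a (γ,C)-Hölder continuous density with respect to Lebesgue measure. Then for any α ∈ (0,1), OOD detection is uniformly learnable for 𝒟 in 𝒫(ℝⁿ). -/

import Mathlib

open MeasureTheory ENNReal Set Filter

noncomputable section

/-- A domain over an instance space `X` is a pair of (Borel) measures on `X`:
the ID distribution and the OOD distribution. -/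
structure Domain (X : Type*) [MeasurableSpace X] where
  inD : Measure X
  outD : Measure X

namespace Domain

variable {X : Type*} [MeasurableSpace X]

/-- Both components of the domain are probability measures. -/
def IsProb (D : Domain X) : Prop :=
  IsProbabilityMeasure D.inD ∧ IsProbabilityMeasure D.outD

/-- The risk `R^α_D(h) = (1−α)·D_in(X∖h) + α·D_out(h)` of a hypothesis `h ⊆ X`. -/
def risk (D : Domain X) (α : ℝ) (h : Set X) : ℝ≥0∞ :=
  ENNReal.ofReal (1 - α) * D.inD hᶜ + ENNReal.ofReal α * D.outD h

/-- The ID risk `R^in_D(h) = D_in(X∖h)`. -/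
def inRisk (D : Domain X) (h : Set X) : ℝ≥0∞ := D.inD hᶜ

/-- The OOD risk `R^out_D(h) = D_out(h)`. -/
def outRisk (D : Domain X) (h : Set X) : ℝ≥0∞ := D.outD h

end Domain

/-- The distribution of `N` i.i.d. samples from `μ`. -/
def iidSamples {X : Type*} [MeasurableSpace X] (μ : Measure X) (N : ℕ) :
    Measure (Fin N → X) :=
  Measure.pi fun _ => μ

/-- A (deterministic) learning algorithm: given accuracy `ε`, confidence `δ`, a sample size
and a tuple of samples, it outputs a hypothesis. -/
abbrev Learner (X : Type*) : Type _ := ℝ → ℝ → (n : ℕ) → (Fin n → X) → Set X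

/-- Uniform learnability of OOD detection for the domain space `𝒟` in the hypothesis space `H`,
with a priori known OOD probability `α`: there are a sample-complexity function `N(ε,δ)` and a
learner which, for every `ε, δ ∈ (0,1/2)` and every domain `D ∈ 𝒟`, given `N(ε,δ)` i.i.d.
samples from `D_in`, outputs with probability at least `1−δ` a hypothesis in `H` whose risk is
within `ε` of the best risk achievable in `H`. -/
def UniformlyLearnable {X : Type*} [MeasurableSpace X]
    (𝒟 : Set (Domain X)) (H : Set (Set X)) (α : ℝ) : Prop :=
  ∃ (N : ℝ → ℝ → ℕ) (A : Learner X),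
    (∀ ε δ n S, A ε δ n S ∈ H) ∧
    ∀ ε δ : ℝ, 0 < ε → ε < 1/2 → 0 < δ → δ < 1/2 →
      ∀ D ∈ 𝒟,
        ENNReal.ofReal (1 - δ) ≤
          iidSamples D.inD (N ε δ)
            {S | D.risk α (A ε δ (N ε δ) S) ≤ (⨅ h' ∈ H, D.risk α h') + ENNReal.ofReal ε}

/-- Non-uniform learnability of OOD detection: as in `UniformlyLearnable`, except that the
number of samples the learner needs may depend on the domain `D ∈ 𝒟`. -/
def NonUniformlyLearnable {X : Type*} [MeasurableSpace X]
    (𝒟 : Set (Domain X)) (H : Set (Set X)) (α : ℝ) : Prop :=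
  ∃ A : Learner X,
    (∀ ε δ n S, A ε δ n S ∈ H) ∧
    ∀ ε δ : ℝ, 0 < ε → ε < 1/2 → 0 < δ → δ < 1/2 →
      ∀ D ∈ 𝒟, ∃ N : ℕ,
        ENNReal.ofReal (1 - δ) ≤
          iidSamples D.inD N
            {S | D.risk α (A ε δ N S) ≤ (⨅ h' ∈ H, D.risk α h') + ENNReal.ofReal ε}

/-- The support of a measure on a topological space: the set of points all of whose open
neighbourhoods have positive measure. -/
def msupport {X : Type*} [MeasurableSpace X] [TopologicalSpace X] (μ : Measure X) : Set X :=
  {x | ∀ U : Set X, IsOpen U → x ∈ U → 0 < μ U}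

/-- The Disjoint Supports Assumption. -/
def Domain.DSA {X : Type*} [MeasurableSpace X] [TopologicalSpace X] (D : Domain X) : Prop :=
  msupport D.inD ∩ msupport D.outD = ∅

/-- The instance space `ℝⁿ`. -/
abbrev Euc (n : ℕ) : Type := EuclideanSpace ℝ (Fin n)

/-- The (extended) distance between two sets. -/
def setEDist {X : Type*} [PseudoEMetricSpace X] (A B : Set X) : ℝ≥0∞ :=
  ⨅ x ∈ A, EMetric.infEdist x B

/-- The `τ`-Far Supports Assumption: the supports of the ID and OOD distributions are at
distance more than `τ`. -/
def Domain.FSA {n : ℕ} (D : Domain (Euc n)) (τ : ℝ) : Prop :=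
  ENNReal.ofReal τ < setEDist (msupport D.inD) (msupport D.outD)

/-- The Bounded ID Support Assumption: the support of the ID distribution has diameter
less than `R`. -/
def Domain.BoundedID {n : ℕ} (D : Domain (Euc n)) (R : ℝ) : Prop :=
  EMetric.diam (msupport D.inD) < ENNReal.ofReal R

/-- `μ` has a `(γ, C)`-Hölder continuous density with respect to Lebesgue measure on `ℝⁿ`. -/
def HolderDensity {n : ℕ} (γ C : ℝ) (μ : Measure (Euc n)) : Prop :=
  ∃ f : Euc n → ℝ, (∀ x, 0 ≤ f x) ∧
    (∀ x y, |f x - f y| ≤ C * ‖x - y‖ ^ γ) ∧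
    μ = MeasureTheory.volume.withDensity fun x => ENNReal.ofReal (f x)

/-!
The learner returns the union of the closed balls of radius `r` around the `N` samples; its risk
is at most the ID mass it leaves uncovered plus the OOD mass of the `N` balls.

Cover the ID support, of diameter `< R`, by `≲ (R / r)ⁿ` balls of radius `r / 2` (a maximal
separated set, counted by volume). A cell of ID mass `q` is missed by all samples with probability
`(1 - q)ᴺ`, and `q (1 - q)ᴺ ≤ 1 / N`, so the expected uncovered mass is `≲ (R / r)ⁿ / N`.
Since the supports are disjoint, the Hölder density vanishes on the support of the other
distribution, hence is `≤ C rᵞ` within distance `r` of it, and each ball carries expected OOD mass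
`≤ C rᵞ vol(B_r)`. Taking `r` small and then `N ≈ (R / r)ⁿ / (εδ)` makes the expected risk at most
`εδ`, and Markov's inequality gives risk `< ε` with probability `≥ 1 - δ`.
-/

open Metric Topology Module

lemma msupport_eq_support {X : Type*} [MeasurableSpace X] [TopologicalSpace X] (μ : Measure X) :
    msupport μ = μ.support := by
  ext x
  simp only [msupport, Measure.support_eq_forall_isOpen, mem_ofPred_eq]
  exact forall_congr' fun U => forall_comm

section Holder

variable {E : Type*} [SeminormedAddCommGroup E] {γ C : ℝ} {f : E → ℝ}

lemma continuous_of_abs_sub_le_mul_norm_rpow (hγ : 0 < γ)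
    (hf : ∀ x y, |f x - f y| ≤ C * ‖x - y‖ ^ γ) : Continuous f := by
  refine continuous_iff_continuousAt.2 fun x => tendsto_iff_norm_sub_tendsto_zero.2 ?_
  have hlim : Tendsto (fun y => C * ‖y - x‖ ^ γ) (𝓝 x) (𝓝 0) := by
    have := ((((continuous_id.sub continuous_const : Continuous fun y : E => y - x).norm).rpow_const
      fun _ => Or.inr hγ.le).const_mul C).tendsto x
    simpa [Real.zero_rpow hγ.ne'] using this
  exact squeeze_zero (fun _ => norm_nonneg _) (fun y => hf y x) hlim

lemma le_mul_rpow_of_nonpos_of_dist_le (hγ : 0 ≤ γ) (hC : 0 ≤ C)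
    (hf : ∀ x y, |f x - f y| ≤ C * ‖x - y‖ ^ γ) {x y : E} {r : ℝ} (hy : f y ≤ 0)
    (hxy : dist x y ≤ r) : f x ≤ C * r ^ γ := by
  have hdiff := (abs_le.1 (hf x y)).2
  have hpow : ‖x - y‖ ^ γ ≤ r ^ γ :=
    Real.rpow_le_rpow (norm_nonneg _) (by rwa [← dist_eq_norm]) hγ
  nlinarith

end Holder

lemma nonpos_of_notMem_support_withDensity {X : Type*} [TopologicalSpace X]
    [MeasurableSpace X] [OpensMeasurableSpace X] {ρ : Measure X} [ρ.IsOpenPosMeasure] {f : X → ℝ}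
    (hf : Continuous f) {x : X} (hx : x ∉ (ρ.withDensity fun y => ENNReal.ofReal (f y)).support) :
    f x ≤ 0 := by
  by_contra! hpos
  obtain ⟨U, hU, hU0⟩ := Measure.notMem_support_iff_exists.1 hx
  rw [withDensity_apply_eq_zero' hf.measurable.ennreal_ofReal.aemeasurable] at hU0
  refine (ρ.measure_pos_of_mem_nhds (inter_mem ?_ hU)).ne' hU0
  filter_upwards [(hf.tendsto x).eventually (lt_mem_nhds hpos)] with y hy
  simpa using hy

lemma measurable_measure_closedBall {X : Type*} [PseudoMetricSpace X] [MeasurableSpace X]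
    [OpensMeasurableSpace X] [SecondCountableTopology X] (ν : Measure X) [SFinite ν] (r : ℝ) :
    Measurable fun s => ν (closedBall s r) :=
  measurable_measure_prodMk_left
    (measurableSet_le (measurable_snd.dist measurable_fst) measurable_const)

section BallMass

variable {E : Type*} [NormedAddCommGroup E] [MeasurableSpace E] [BorelSpace E]
  [SecondCountableTopology E] {ρ μ ν : Measure E} [ρ.IsAddHaarMeasure] {γ C : ℝ}

lemma lintegral_measure_closedBall_eq [SFinite ρ] [SFinite ν] (r : ℝ) :
    ∫⁻ s, ν (closedBall s r) ∂ρ = ρ (closedBall 0 r) * ν univ := by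
  have hW : MeasurableSet {p : E × E | dist p.2 p.1 ≤ r} :=
    measurableSet_le (measurable_snd.dist measurable_fst) measurable_const
  calc ∫⁻ s, ν (closedBall s r) ∂ρ = ρ.prod ν {p | dist p.2 p.1 ≤ r} :=
        (Measure.prod_apply hW).symm
    _ = ∫⁻ y, ρ (closedBall y r) ∂ν := by
      rw [Measure.prod_apply_symm hW]
      congr with y
      congr 1 with s
      simp [dist_comm]
    _ = ρ (closedBall 0 r) * ν univ := by
      simp_rw [Measure.addHaar_closedBall_center ρ]
      exact lintegral_const _

lemma lintegral_measure_closedBall_le_of_holderDensity_left [SFinite ρ]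
    [IsProbabilityMeasure ν] (hγ : 0 < γ) (hC : 0 ≤ C) {f : E → ℝ}
    (hf : ∀ x y, |f x - f y| ≤ C * ‖x - y‖ ^ γ)
    (hμ : μ = ρ.withDensity fun x => ENNReal.ofReal (f x)) (hdisj : Disjoint μ.support ν.support)
    (r : ℝ) :
    ∫⁻ s, ν (closedBall s r) ∂μ ≤ ENNReal.ofReal (C * r ^ γ) * ρ (closedBall 0 r) := by
  have hfc := continuous_of_abs_sub_le_mul_norm_rpow hγ hf
  have hpt : ∀ s, ENNReal.ofReal (f s) * ν (closedBall s r) ≤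
      ENNReal.ofReal (C * r ^ γ) * ν (closedBall s r) := by
    intro s
    rcases eq_zero_or_pos (ν (closedBall s r)) with h | h
    · simp [h]
    obtain ⟨y, hys, hyν⟩ := Measure.nonempty_inter_support_of_pos h
    have hy : f y ≤ 0 := nonpos_of_notMem_support_withDensity hfc
      (hμ ▸ disjoint_right.1 hdisj hyν)
    gcongr
    exact le_mul_rpow_of_nonpos_of_dist_le hγ.le hC hf hy (by rw [dist_comm]; exact hys)
  calc ∫⁻ s, ν (closedBall s r) ∂μ
        = ∫⁻ s, ENNReal.ofReal (f s) * ν (closedBall s r) ∂ρ := by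
        rw [hμ, lintegral_withDensity_eq_lintegral_mul _
          hfc.measurable.ennreal_ofReal (measurable_measure_closedBall ν r)]
        rfl
    _ ≤ ∫⁻ s, ENNReal.ofReal (C * r ^ γ) * ν (closedBall s r) ∂ρ := lintegral_mono hpt
    _ = ENNReal.ofReal (C * r ^ γ) * ρ (closedBall 0 r) := by
      rw [lintegral_const_mul _ (measurable_measure_closedBall ν r),
        lintegral_measure_closedBall_eq, measure_univ, mul_one]

lemma lintegral_measure_closedBall_le_of_holderDensity_right [IsProbabilityMeasure μ]
    (hγ : 0 < γ) (hC : 0 ≤ C) {g : E → ℝ} (hg : ∀ x y, |g x - g y| ≤ C * ‖x - y‖ ^ γ)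
    (hν : ν = ρ.withDensity fun x => ENNReal.ofReal (g x)) (hdisj : Disjoint μ.support ν.support)
    (r : ℝ) :
    ∫⁻ s, ν (closedBall s r) ∂μ ≤ ENNReal.ofReal (C * r ^ γ) * ρ (closedBall 0 r) := by
  have hgc := continuous_of_abs_sub_le_mul_norm_rpow hγ hg
  have hpt : ∀ s ∈ μ.support,
      ν (closedBall s r) ≤ ENNReal.ofReal (C * r ^ γ) * ρ (closedBall 0 r) := by
    intro s hs
    have hgs : g s ≤ 0 := nonpos_of_notMem_support_withDensity hgc
      (hν ▸ disjoint_left.1 hdisj hs)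
    calc ν (closedBall s r) = ∫⁻ y in closedBall s r, ENNReal.ofReal (g y) ∂ρ := by
          rw [hν, withDensity_apply _ measurableSet_closedBall]
      _ ≤ ∫⁻ _ in closedBall s r, ENNReal.ofReal (C * r ^ γ) ∂ρ :=
          setLIntegral_mono' measurableSet_closedBall fun y hy => ENNReal.ofReal_le_ofReal
            (le_mul_rpow_of_nonpos_of_dist_le hγ.le hC hg hgs hy)
      _ = ENNReal.ofReal (C * r ^ γ) * ρ (closedBall 0 r) := by
          rw [setLIntegral_const, Measure.addHaar_closedBall_center]
  calc ∫⁻ s, ν (closedBall s r) ∂μ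
        ≤ ∫⁻ _, ENNReal.ofReal (C * r ^ γ) * ρ (closedBall 0 r) ∂μ :=
        lintegral_mono_ae (Filter.Eventually.mono (Measure.support_mem_ae (μ := μ)) hpt)
    _ = ENNReal.ofReal (C * r ^ γ) * ρ (closedBall 0 r) := by simp

end BallMass

lemma natCast_mul_mul_one_sub_pow_le_one {q : ℝ} (hq0 : 0 ≤ q) (hq1 : q ≤ 1) (N : ℕ) :
    N * q * (1 - q) ^ N ≤ 1 := by
  have h1q : 0 ≤ 1 - q := by linarith
  calc N * q * (1 - q) ^ N ≤ (1 + N * q) * (1 - q) ^ N := by gcongr; linarith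
    _ ≤ (1 + q) ^ N * (1 - q) ^ N := by gcongr; exact one_add_mul_le_pow (by linarith) N
    _ = (1 - q ^ 2) ^ N := by rw [← mul_pow]; ring
    _ ≤ 1 := pow_le_one₀ (by nlinarith) (by nlinarith)

lemma ENNReal.mul_one_sub_pow_le_inv_natCast {q : ℝ≥0∞} (hq : q ≤ 1) (N : ℕ) :
    q * (1 - q) ^ N ≤ (N : ℝ≥0∞)⁻¹ := by
  rw [ENNReal.le_inv_iff_mul_le]
  obtain ⟨p, hp, rfl⟩ : ∃ p : ℝ, 0 ≤ p ∧ ENNReal.ofReal p = q :=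
    ⟨q.toReal, ENNReal.toReal_nonneg, ENNReal.ofReal_toReal (ne_top_of_le_ne_top one_ne_top hq)⟩
  have hp1 : p ≤ 1 := by simpa using hq
  rw [← ENNReal.ofReal_one, ← ENNReal.ofReal_sub _ hp, ← ENNReal.ofReal_pow (by linarith),
    ← ENNReal.ofReal_natCast, ← ENNReal.ofReal_mul hp, ← ENNReal.ofReal_mul (by positivity)]
  exact ENNReal.ofReal_le_ofReal (by linarith [natCast_mul_mul_one_sub_pow_le_one hp hp1 N])

lemma lintegral_one_sub_measure_closedBall_pow_le {X : Type*} [PseudoMetricSpace X]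
    [MeasurableSpace X] [OpensMeasurableSpace X] (μ : Measure X) [IsProbabilityMeasure μ]
    (N : ℕ) {r : ℝ} {ι : Type*} [Fintype ι] {c : ι → X}
    (hc : ∀ᵐ x ∂μ, x ∈ ⋃ i, ball (c i) (r / 2)) :
    ∫⁻ x, (1 - μ (closedBall x r)) ^ N ∂μ ≤ Fintype.card ι / N := by
  have hcell : ∀ t,
      ∫⁻ x in ball t (r / 2), (1 - μ (closedBall x r)) ^ N ∂μ ≤ (N : ℝ≥0∞)⁻¹ := by
    intro t
    calc ∫⁻ x in ball t (r / 2), (1 - μ (closedBall x r)) ^ N ∂μ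
        ≤ ∫⁻ _ in ball t (r / 2), (1 - μ (ball t (r / 2))) ^ N ∂μ := by
          refine setLIntegral_mono' measurableSet_ball fun x hx => ?_
          have hsub : ball t (r / 2) ⊆ closedBall x r :=
            (ball_subset_ball' (by linarith [mem_ball'.1 hx])).trans ball_subset_closedBall
          gcongr
      _ = μ (ball t (r / 2)) * (1 - μ (ball t (r / 2))) ^ N := by
          rw [setLIntegral_const, mul_comm]
      _ ≤ (N : ℝ≥0∞)⁻¹ := ENNReal.mul_one_sub_pow_le_inv_natCast prob_le_one N
  calc ∫⁻ x, (1 - μ (closedBall x r)) ^ N ∂μ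
      = ∫⁻ x in ⋃ i, ball (c i) (r / 2), (1 - μ (closedBall x r)) ^ N ∂μ := by
        rw [Measure.restrict_eq_self_of_ae_mem hc]
    _ ≤ ∑ i, ∫⁻ x in ball (c i) (r / 2), (1 - μ (closedBall x r)) ^ N ∂μ :=
        (lintegral_iUnion_le _ _).trans_eq (tsum_fintype _)
    _ ≤ ∑ _i : ι, (N : ℝ≥0∞)⁻¹ := Finset.sum_le_sum fun i _ => hcell (c i)
    _ = Fintype.card ι / N := by simp [div_eq_mul_inv]

instance {X : Type*} [MeasurableSpace X] (μ : Measure X) [IsProbabilityMeasure μ] (N : ℕ) :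
    IsProbabilityMeasure (iidSamples μ N) := by
  unfold iidSamples
  infer_instance

lemma measurePreserving_eval_iidSamples {X : Type*} [MeasurableSpace X] (μ : Measure X)
    [IsProbabilityMeasure μ] {N : ℕ} (i : Fin N) :
    MeasurePreserving (Function.eval i) (iidSamples μ N) μ :=
  measurePreserving_eval (fun _ => μ) i

def ballCover {X : Type*} [PseudoMetricSpace X] {N : ℕ} (S : Fin N → X) (r : ℝ) : Set X :=
  ⋃ i, closedBall (S i) r

section Sampling

variable {X : Type*} [PseudoMetricSpace X] [MeasurableSpace X] [OpensMeasurableSpace X]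
  [SecondCountableTopology X] {N : ℕ}

lemma measurableSet_setOf_mem_ballCover (r : ℝ) :
    MeasurableSet {p : (Fin N → X) × X | p.2 ∈ ballCover p.1 r} := by
  simp only [ballCover, mem_iUnion, mem_closedBall, ofPred_exists]
  exact MeasurableSet.iUnion fun i =>
    measurableSet_le (measurable_snd.dist ((measurable_pi_apply i).comp measurable_fst))
      measurable_const

lemma measurable_measure_ballCover (μ : Measure X) [SFinite μ] (r : ℝ) :
    Measurable fun S : Fin N → X => μ (ballCover S r) :=
  measurable_measure_prodMk_left (measurableSet_setOf_mem_ballCover r)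

lemma measurable_measure_compl_ballCover (μ : Measure X) [SFinite μ] (r : ℝ) :
    Measurable fun S : Fin N → X => μ (ballCover S r)ᶜ :=
  measurable_measure_prodMk_left (measurableSet_setOf_mem_ballCover r).compl

lemma lintegral_measure_compl_ballCover_eq (μ : Measure X) [IsProbabilityMeasure μ] (r : ℝ) :
    ∫⁻ S, μ (ballCover S r)ᶜ ∂iidSamples μ N = ∫⁻ x, (1 - μ (closedBall x r)) ^ N ∂μ := by
  have hW := (measurableSet_setOf_mem_ballCover (X := X) (N := N) r).compl
  calc ∫⁻ S, μ (ballCover S r)ᶜ ∂iidSamples μ N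
      = (iidSamples μ N).prod μ {p | p.2 ∈ ballCover p.1 r}ᶜ := (Measure.prod_apply hW).symm
    _ = ∫⁻ x, (1 - μ (closedBall x r)) ^ N ∂μ := by
      rw [Measure.prod_apply_symm hW]
      congr with x
      have hpi : (fun S => (S, x)) ⁻¹' {p : (Fin N → X) × X | p.2 ∈ ballCover p.1 r}ᶜ =
          univ.pi fun _ => (closedBall x r)ᶜ := by
        ext S
        simp [ballCover, dist_comm]
      rw [hpi, iidSamples, Measure.pi_pi, prob_compl_eq_one_sub measurableSet_closedBall,
        Finset.prod_const, Finset.card_univ, Fintype.card_fin]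

end Sampling

section Packing

variable {E : Type*} [NormedAddCommGroup E] [NormedSpace ℝ E] [FiniteDimensional ℝ E]

lemma card_mul_pow_le_of_pairwise_le_dist {T : Finset E} {r R : ℝ} (hr : 0 < r) (hR : 0 ≤ R)
    (hsep : (T : Set E).Pairwise fun x y => 2 * r ≤ dist x y)
    (hdiam : ∀ x ∈ T, ∀ y ∈ T, dist x y ≤ R) :
    (T.card : ℝ) * r ^ finrank ℝ E ≤ (R + r) ^ finrank ℝ E := by
  rcases T.eq_empty_or_nonempty with rfl | ⟨c, hc⟩
  · simp only [Finset.card_empty, Nat.cast_zero, zero_mul]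
    positivity
  borelize E
  set μ : Measure E := Measure.addHaar
  have hdisj : (T : Set E).PairwiseDisjoint fun t => ball t r := fun x hx y hy hxy =>
    ball_disjoint_ball (by linarith [hsep hx hy hxy])
  have hsub : (⋃ t ∈ T, ball t r) ⊆ ball c (R + r) := iUnion₂_subset fun t ht =>
    ball_subset_ball' (by linarith [hdiam t ht c hc])
  have hvol : ∑ t ∈ T, μ (ball t r) ≤ μ (ball c (R + r)) :=
    (measure_biUnion_finset hdisj fun t _ => measurableSet_ball).symm.trans_le (measure_mono hsub)
  simp only [Measure.addHaar_ball_of_pos μ _ hr,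
    Measure.addHaar_ball_of_pos μ _ (by linarith : 0 < R + r), Finset.sum_const, nsmul_eq_mul,
    ← mul_assoc] at hvol
  rw [ENNReal.mul_le_mul_iff_left (measure_ball_pos μ 0 one_pos).ne' measure_ball_lt_top.ne,
    ← ENNReal.ofReal_natCast, ← ENNReal.ofReal_mul (by positivity),
    ENNReal.ofReal_le_ofReal_iff (by positivity)] at hvol
  exact hvol

lemma exists_finset_subset_iUnion_ball_card_mul_pow_le {K : Set E} {r R : ℝ} (hr : 0 < r)
    (hR : 0 ≤ R) (hK : ∀ x ∈ K, ∀ y ∈ K, dist x y ≤ R) :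
    ∃ T : Finset E, K ⊆ ⋃ t ∈ T, ball t (2 * r) ∧
      (T.card : ℝ) * r ^ finrank ℝ E ≤ (R + r) ^ finrank ℝ E := by
  classical
  set d := finrank ℝ E
  have hpack : ∀ T : Finset E, ↑T ⊆ K → (T : Set E).Pairwise (fun x y => 2 * r ≤ dist x y) →
      (T.card : ℝ) * r ^ d ≤ (R + r) ^ d := fun T hTK hsep =>
    card_mul_pow_le_of_pairwise_le_dist hr hR hsep fun x hx y hy => hK x (hTK hx) y (hTK hy)
  let P : ℕ → Prop := fun k => ∃ T : Finset E, ↑T ⊆ K ∧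
    (T : Set E).Pairwise (fun x y => 2 * r ≤ dist x y) ∧ T.card = k
  have hbound : ∀ k, P k → k ≤ ⌊(R + r) ^ d / r ^ d⌋₊ := by
    rintro _ ⟨T, hTK, hsep, rfl⟩
    exact Nat.le_floor ((le_div_iff₀ (by positivity)).2 (hpack T hTK hsep))
  obtain ⟨T, hTK, hsep, hcard⟩ := Nat.findGreatest_spec (P := P) (n := ⌊(R + r) ^ d / r ^ d⌋₊)
    (Nat.zero_le _) ⟨∅, by simp, by simp, rfl⟩
  refine ⟨T, fun x hxK => ?_, hpack T hTK hsep⟩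
  by_contra hx
  simp only [mem_iUnion₂, mem_ball, not_exists, not_lt] at hx
  have hxT : x ∉ T := fun h => by linarith [hx x h, dist_self x]
  have hnext : P (T.card + 1) := by
    refine ⟨insert x T, by simpa using insert_subset hxK hTK, ?_,
      Finset.card_insert_of_notMem hxT⟩
    rw [Finset.coe_insert]
    exact hsep.insert fun t ht _ => ⟨hx t ht, dist_comm x t ▸ hx t ht⟩
  exact Nat.findGreatest_is_greatest (by omega) (hbound _ hnext) hnext

end Packing

lemma lintegral_measure_compl_ballCover_le {E : Type*} [NormedAddCommGroup E] [NormedSpace ℝ E]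
    [FiniteDimensional ℝ E] [MeasurableSpace E] [BorelSpace E] (μ : Measure E)
    [IsProbabilityMeasure μ] (N : ℕ) {r R : ℝ} (hr : 0 < r) (hR : 0 ≤ R)
    (hdiam : ∀ x ∈ μ.support, ∀ y ∈ μ.support, dist x y ≤ R) :
    ∫⁻ S, μ (ballCover S r)ᶜ ∂iidSamples μ N ≤
      ENNReal.ofReal (((4 * R + r) / r) ^ finrank ℝ E) / N := by
  obtain ⟨T, hcov, hcard⟩ :=
    exists_finset_subset_iUnion_ball_card_mul_pow_le (r := r / 4) (by positivity) hR hdiam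
  have hcov' : ∀ᵐ x ∂μ, x ∈ ⋃ t : T, ball (t : E) (r / 2) :=
    Filter.Eventually.mono (Measure.support_mem_ae (μ := μ)) fun x hx => by
      simpa [show 2 * (r / 4) = r / 2 by ring] using hcov hx
  rw [lintegral_measure_compl_ballCover_eq]
  refine (lintegral_one_sub_measure_closedBall_pow_le μ N hcov').trans ?_
  gcongr
  rw [Fintype.card_coe, ← ENNReal.ofReal_natCast]
  refine ENNReal.ofReal_le_ofReal ?_
  rw [div_pow, le_div_iff₀ (by positivity)]
  calc (T.card : ℝ) * r ^ finrank ℝ E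
        = T.card * (r / 4) ^ finrank ℝ E * 4 ^ finrank ℝ E := by
        rw [div_pow]; field_simp
    _ ≤ (R + r / 4) ^ finrank ℝ E * 4 ^ finrank ℝ E := by gcongr
    _ = (4 * R + r) ^ finrank ℝ E := by rw [← mul_pow]; ring_nf

lemma Domain.lintegral_risk_ballCover_le {X : Type*} [PseudoMetricSpace X] [MeasurableSpace X]
    [OpensMeasurableSpace X] [SecondCountableTopology X] (D : Domain X)
    [IsProbabilityMeasure D.inD] [SFinite D.outD] {α : ℝ} (hα0 : 0 ≤ α) (hα1 : α ≤ 1)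
    (N : ℕ) (r : ℝ) :
    ∫⁻ S, D.risk α (ballCover S r) ∂iidSamples D.inD N ≤
      ∫⁻ S, D.inD (ballCover S r)ᶜ ∂iidSamples D.inD N +
        N * ∫⁻ s, D.outD (closedBall s r) ∂D.inD := by
  have hrisk : ∀ S : Fin N → X, D.risk α (ballCover S r) ≤
      D.inD (ballCover S r)ᶜ + ∑ i, D.outD (closedBall (S i) r) := fun S =>
    add_le_add (mul_le_of_le_one_left' (ENNReal.ofReal_le_one.2 (by linarith)))
      ((mul_le_of_le_one_left' (ENNReal.ofReal_le_one.2 hα1)).trans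
        (measure_iUnion_fintype_le _ _))
  calc ∫⁻ S, D.risk α (ballCover S r) ∂iidSamples D.inD N
      ≤ ∫⁻ S, D.inD (ballCover S r)ᶜ + ∑ i, D.outD (closedBall (S i) r)
          ∂iidSamples D.inD N :=
        lintegral_mono hrisk
    _ = ∫⁻ S, D.inD (ballCover S r)ᶜ ∂iidSamples D.inD N +
          ∑ i, ∫⁻ S, D.outD (closedBall (S i) r) ∂iidSamples D.inD N := by
        rw [lintegral_add_left (measurable_measure_compl_ballCover _ r),
          lintegral_finsetSum (f := fun i (S : Fin N → X) => D.outD (closedBall (S i) r)) _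
            fun i _ => (measurable_measure_closedBall _ r).comp (measurable_pi_apply i)]
    _ = _ := by
        simp_rw [fun i => (measurePreserving_eval_iidSamples D.inD i).lintegral_comp
          (measurable_measure_closedBall D.outD r)]
        simp

lemma Domain.measurable_risk_ballCover {X : Type*} [PseudoMetricSpace X] [MeasurableSpace X]
    [OpensMeasurableSpace X] [SecondCountableTopology X] (D : Domain X) [SFinite D.inD]
    [SFinite D.outD] (α : ℝ) (N : ℕ) (r : ℝ) :
    Measurable fun S : Fin N → X => D.risk α (ballCover S r) :=
  ((measurable_measure_compl_ballCover _ r).const_mul _).add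
    ((measurable_measure_ballCover _ r).const_mul _)

theorem uniformlyLearnable_univ_of_lintegral_risk_le {X : Type*} [MeasurableSpace X]
    {𝒟 : Set (Domain X)} {α : ℝ} (hprob : ∀ D ∈ 𝒟, IsProbabilityMeasure D.inD)
    (h : ∀ η : ℝ, 0 < η → ∃ (N : ℕ) (A : (n : ℕ) → (Fin n → X) → Set X), ∀ D ∈ 𝒟,
      Measurable (fun S => D.risk α (A N S)) ∧
        ∫⁻ S, D.risk α (A N S) ∂iidSamples D.inD N ≤ ENNReal.ofReal η) :
    UniformlyLearnable 𝒟 univ α := by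
  choose! N A hA using h
  refine ⟨fun ε δ => N (ε * δ), fun ε δ => A (ε * δ), fun _ _ _ _ => mem_univ _, ?_⟩
  intro ε δ hε _ hδ _ D hD
  have := hprob D hD
  obtain ⟨hmeas, hint⟩ := hA (ε * δ) (mul_pos hε hδ) D hD
  set P := iidSamples D.inD (N (ε * δ))
  set risk := fun S => D.risk α (A (ε * δ) (N (ε * δ)) S)
  have hbad : P {S | ENNReal.ofReal ε ≤ risk S} ≤ ENNReal.ofReal δ :=
    calc P {S | ENNReal.ofReal ε ≤ risk S} ≤ (∫⁻ S, risk S ∂P) / ENNReal.ofReal ε :=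
          meas_ge_le_lintegral_div hmeas.aemeasurable (by simpa using hε) ENNReal.ofReal_ne_top
      _ ≤ ENNReal.ofReal (ε * δ) / ENNReal.ofReal ε := by gcongr
      _ = ENNReal.ofReal δ := by
        rw [← ENNReal.ofReal_div_of_pos hε, mul_div_cancel_left₀ _ hε.ne']
  calc ENNReal.ofReal (1 - δ) = 1 - ENNReal.ofReal δ := by
        rw [ENNReal.ofReal_sub _ hδ.le, ENNReal.ofReal_one]
    _ ≤ 1 - P {S | ENNReal.ofReal ε ≤ risk S} := tsub_le_tsub_left hbad 1
    _ = P {S | ENNReal.ofReal ε ≤ risk S}ᶜ :=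
        (prob_compl_eq_one_sub (measurableSet_le measurable_const hmeas)).symm
    _ ≤ _ := measure_mono fun S hS => by
        simp only [mem_compl_iff, mem_ofPred_eq, not_le] at hS
        exact hS.le.trans le_add_self

lemma exists_radius_sampleSize {d : ℕ} {γ C R v η : ℝ} (hγ : 0 < γ) (hC : 0 ≤ C) (hR : 0 < R)
    (hv : 0 ≤ v) (hη : 0 < η) :
    ∃ (r : ℝ) (N : ℕ), 0 < r ∧ 2 * ((4 * R + r) / r) ^ d ≤ η * N ∧
      2 * (N * (C * r ^ γ * (r ^ d * v))) ≤ η := by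
  -- `r` is fixed first, so that `r ^ γ ≤ t` absorbs the bound `N * r ^ d ≤ A` on the `N` chosen
  -- after it.
  set A : ℝ := 2 * (5 * R) ^ d / η + 1
  set t : ℝ := η / (2 * (C * v * A + 1))
  have ht : 0 < t := by positivity
  set r := min (min R 1) (t ^ γ⁻¹)
  have hr : 0 < r := lt_min (lt_min hR one_pos) (Real.rpow_pos_of_pos ht _)
  have hrR : r ≤ R := (min_le_left _ _).trans (min_le_left _ _)
  have hr1 : r ≤ 1 := (min_le_left _ _).trans (min_le_right _ _)
  have hrγ : r ^ γ ≤ t :=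
    calc r ^ γ ≤ (t ^ γ⁻¹) ^ γ := Real.rpow_le_rpow hr.le (min_le_right _ _) hγ.le
      _ = t := Real.rpow_inv_rpow ht.le hγ.ne'
  set N := ⌈2 * ((4 * R + r) / r) ^ d / η⌉₊
  refine ⟨r, N, hr, ?_, ?_⟩
  · rw [mul_comm η, ← div_le_iff₀ hη]
    exact Nat.le_ceil _
  have hNr : N * r ^ d ≤ A :=
    calc (N : ℝ) * r ^ d ≤ (2 * ((4 * R + r) / r) ^ d / η + 1) * r ^ d :=
          mul_le_mul_of_nonneg_right (Nat.ceil_lt_add_one (by positivity)).le (by positivity)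
      _ = 2 * (4 * R + r) ^ d / η + r ^ d := by
          rw [div_pow]
          field_simp
      _ ≤ A := add_le_add (by gcongr; linarith) (pow_le_one₀ hr.le hr1)
  calc 2 * (N * (C * r ^ γ * (r ^ d * v))) = 2 * (C * v) * r ^ γ * (N * r ^ d) := by
        ring
    _ ≤ 2 * (C * v) * t * A := by gcongr
    _ = η * (C * v * A / (C * v * A + 1)) := by
        simp only [t]
        field_simp
    _ ≤ η := mul_le_of_le_one_right hη.le ((div_le_one (by positivity)).2 (by linarith))

lemma Domain.BoundedID.dist_le {n : ℕ} {D : Domain (Euc n)} {R : ℝ} (h : D.BoundedID R) :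
    ∀ x ∈ D.inD.support, ∀ y ∈ D.inD.support, dist x y ≤ R := by
  intro x hx y hy
  rw [← msupport_eq_support] at hx hy
  exact (edist_lt_ofReal.1 ((Metric.edist_le_ediam_of_mem hx hy).trans_lt h)).le

lemma Domain.lintegral_outD_closedBall_le {n : ℕ} {γ C : ℝ} (hγ : 0 < γ) (hC : 0 ≤ C)
    {D : Domain (Euc n)} (hD : D.IsProb) (hdsa : D.DSA)
    (hholder : HolderDensity γ C D.inD ∨ HolderDensity γ C D.outD) (r : ℝ) :
    ∫⁻ s, D.outD (closedBall s r) ∂D.inD ≤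
      ENNReal.ofReal (C * r ^ γ) * volume (closedBall (0 : Euc n) r) := by
  obtain ⟨_, _⟩ := hD
  have hdisj : Disjoint D.inD.support D.outD.support := by
    simpa [Domain.DSA, msupport_eq_support, disjoint_iff_inter_eq_empty] using hdsa
  rcases hholder with ⟨f, -, hf, hμ⟩ | ⟨g, -, hg, hν⟩
  · exact lintegral_measure_closedBall_le_of_holderDensity_left hγ hC hf hμ hdisj r
  · exact lintegral_measure_closedBall_le_of_holderDensity_right hγ hC hg hν hdisj r

/-- **Uniform OOD detection under Hölder continuity and bounded ID supports.** -/
theorem uniform_OOD_detection_holder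
    (n : ℕ) (γ C R : ℝ) (hγ : 0 < γ) (hC : 0 ≤ C) (hR : 0 < R)
    (𝒟 : Set (Domain (Euc n))) (hprob : ∀ D ∈ 𝒟, D.IsProb)
    (hdsa : ∀ D ∈ 𝒟, D.DSA) (hbdd : ∀ D ∈ 𝒟, D.BoundedID R)
    (hholder : (∀ D ∈ 𝒟, HolderDensity γ C D.inD) ∨ (∀ D ∈ 𝒟, HolderDensity γ C D.outD))
    (α : ℝ) (hα : α ∈ Set.Ioo (0 : ℝ) 1) :
    UniformlyLearnable 𝒟 Set.univ α := by
  refine uniformlyLearnable_univ_of_lintegral_risk_le (fun D hD => (hprob D hD).1) fun η hη => ?_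
  set v := (volume (ball (0 : Euc n) 1)).toReal
  obtain ⟨r, N, hr, hmiss, hout⟩ :=
    exists_radius_sampleSize (d := n) (v := v) hγ hC hR ENNReal.toReal_nonneg hη
  refine ⟨N, fun _ S => ballCover S r, fun D hD => ?_⟩
  obtain ⟨_, _⟩ := hprob D hD
  have hvol : volume (closedBall (0 : Euc n) r) = ENNReal.ofReal (r ^ n * v) := by
    rw [Measure.addHaar_closedBall _ _ hr.le, finrank_euclideanSpace_fin,
      ENNReal.ofReal_mul (by positivity), ENNReal.ofReal_toReal measure_ball_lt_top.ne]
  refine ⟨D.measurable_risk_ballCover α N r, ?_⟩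
  calc _ ≤ _ := D.lintegral_risk_ballCover_le hα.1.le hα.2.le N r
    _ ≤ ENNReal.ofReal (((4 * R + r) / r) ^ n) / N +
          N * (ENNReal.ofReal (C * r ^ γ) * volume (closedBall (0 : Euc n) r)) := by
      gcongr
      · simpa using lintegral_measure_compl_ballCover_le D.inD N hr hR.le (hbdd D hD).dist_le
      · exact D.lintegral_outD_closedBall_le hγ hC (hprob D hD) (hdsa D hD)
          (hholder.imp (· D hD) (· D hD)) r
    _ ≤ ENNReal.ofReal (η / 2) + ENNReal.ofReal (η / 2) := by
      rw [hvol, ← ENNReal.ofReal_mul (by positivity), ← ENNReal.ofReal_natCast,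
        ← ENNReal.ofReal_mul (by positivity)]
      gcongr
      · refine ENNReal.div_le_of_le_mul ?_
        rw [← ENNReal.ofReal_mul (by positivity)]
        exact ENNReal.ofReal_le_ofReal (by linarith)
      · linarith
    _ = ENNReal.ofReal η := by
      rw [← ENNReal.ofReal_add (by positivity) (by positivity), add_halves]
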